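/- Let G be a finitely generated group with derived series G^{(0)} = G, G^{(i+1)} = [G^{(i)}, G^{(i)}]. Then 𝔥(G/G^{(1)}) ≅ 𝔥(G)/𝔥(G)′, and for every i ≥ 2 the projection G → G/G^{(i)} induces an isomorphism of graded Lie algebras 𝔥(G) ≅ 𝔥(G/G^{(i)}). -/

import Mathlib

open TensorProduct
open scoped commutatorElement

noncomputable section

namespace ArXiv170107768

/-! ### Fox calculus and Magnus coefficients for free groups -/

/-- The integral group ring `ℤF` of the free group on `n` generators. -/
abbrev GrpRing (n : ℕ) := MonoidAlgebra ℤ (FreeGroup (Fin n))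

/-- Auxiliary group used to define Fox derivatives: pairs `(g, d)` with
multiplication `(g, d) * (h, e) = (g h, d + g·e)`, encoding the Fox product rule
`∂(uv) = ∂u · ε(v) + u · ∂v`. -/
def FoxPair (n : ℕ) := FreeGroup (Fin n) × GrpRing n

instance (n : ℕ) : Group (FoxPair n) where
  mul a b := (a.1 * b.1, a.2 + MonoidAlgebra.single a.1 1 * b.2)
  one := (1, 0)
  inv a := (a.1⁻¹, -(MonoidAlgebra.single a.1⁻¹ 1 * a.2))
  mul_assoc a b c := by
    refine Prod.ext (mul_assoc _ _ _) ?_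
    show (a.2 + MonoidAlgebra.single a.1 1 * b.2) + MonoidAlgebra.single (a.1 * b.1) 1 * c.2
        = a.2 + MonoidAlgebra.single a.1 1 * (b.2 + MonoidAlgebra.single b.1 1 * c.2)
    rw [mul_add, ← mul_assoc, MonoidAlgebra.single_mul_single, mul_one, add_assoc]
  one_mul a := by
    refine Prod.ext (one_mul _) ?_
    show 0 + MonoidAlgebra.single 1 1 * a.2 = a.2
    rw [← MonoidAlgebra.one_def, one_mul, zero_add]
  mul_one a := by
    refine Prod.ext (mul_one _) ?_
    show a.2 + MonoidAlgebra.single a.1 1 * 0 = a.2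
    rw [mul_zero, add_zero]
  inv_mul_cancel a := by
    refine Prod.ext (inv_mul_cancel _) ?_
    show -(MonoidAlgebra.single a.1⁻¹ 1 * a.2) + MonoidAlgebra.single a.1⁻¹ 1 * a.2 = 0
    exact neg_add_cancel _

/-- The group homomorphism `F → F ⋉ ℤF` whose second component is the `i`-th Fox
derivative (on group elements). It is determined by `x_j ↦ (x_j, δ_{ij})`. -/
def foxHom {n : ℕ} (i : Fin n) : FreeGroup (Fin n) →* FoxPair n :=
  FreeGroup.lift fun j => (FreeGroup.of j, if j = i then 1 else 0)

/-- The `i`-th Fox derivative `∂_i : ℤF → ℤF`, extended `ℤ`-linearly from group elements. -/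
def foxD {n : ℕ} (i : Fin n) : GrpRing n →ₗ[ℤ] GrpRing n :=
  (Finsupp.linearCombination ℤ fun g => (foxHom i g).2) ∘ₗ
    (MonoidAlgebra.coeffLinearEquiv ℤ).toLinearMap

/-- The augmentation map `ε : ℤF → ℤ`. -/
def aug {n : ℕ} : GrpRing n →ₗ[ℤ] ℤ :=
  (Finsupp.linearCombination ℤ fun _ => (1 : ℤ)) ∘ₗ
    (MonoidAlgebra.coeffLinearEquiv ℤ).toLinearMap

/-- For a multi-index `I = (i₁, …, i_s)`, the iterated Fox derivative coefficient
`ε_I(w) = ε(∂_{i₁}(∂_{i₂}(⋯ ∂_{i_s}(w))))`; this is the coefficient of `x_{i₁}⋯x_{i_s}`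
in the classical Magnus expansion of `w`. -/
def epsI {n : ℕ} (I : List (Fin n)) (w : FreeGroup (Fin n)) : ℤ :=
  aug (I.foldr (fun i x => foxD i x) (MonoidAlgebra.single w 1))

/-- The coefficients of the Magnus `κ`-expansion relative to the `b × n` matrix `a` of
`π = H₁(φ; ℚ)`:  `κ(w)_{(i₁,…,i_k)} = Σ_{s₁,…,s_k} a_{i₁ s₁} ⋯ a_{i_k s_k} ε_{(s₁,…,s_k)}(w)`. -/
def kappaCoeff {n b : ℕ} (a : Fin b → Fin n → ℚ) (w : FreeGroup (Fin n))
    (I : List (Fin b)) : ℚ :=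
  ∑ σ : Fin I.length → Fin n, (∏ j, a (I.get j) (σ j)) * (epsI (List.ofFn σ) w : ℚ)

/-- The degree-2 part of the Magnus `κ`-expansion, viewed in the free Lie algebra:
`κ₂(w) = Σ_{i<j} κ(w)_{i,j} [y_i, y_j]`. -/
def kappa2El {n b : ℕ} (a : Fin b → Fin n → ℚ) (w : FreeGroup (Fin n)) :
    FreeLieAlgebra ℚ (Fin b) :=
  ∑ i : Fin b, ∑ j : Fin b,
    if (i : ℕ) < (j : ℕ) then
      kappaCoeff a w [i, j] • ⁅FreeLieAlgebra.of ℚ i, FreeLieAlgebra.of ℚ j⁆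
    else 0

/-- The `m × n` matrix `E` is in row-echelon form with `d` nonzero rows and pivots `p`. -/
structure IsRowEchelonWith {m n : ℕ} (E : Fin m → Fin n → ℤ) (d : ℕ)
    (p : Fin d → Fin n) : Prop where
  le_m : d ≤ m
  mono : StrictMono p
  pivot_ne : ∀ (k : Fin d) (hk : (k : ℕ) < m), E ⟨k, hk⟩ (p k) ≠ 0
  pivot_lead : ∀ (k : Fin d) (hk : (k : ℕ) < m) (j : Fin n), (j : ℕ) < (p k : ℕ) →
    E ⟨k, hk⟩ j = 0
  zero_rows : ∀ k : Fin m, d ≤ (k : ℕ) → ∀ j, E k j = 0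

/-! ### Lower central series and the rational associated graded Lie algebra -/

/-- The lower central series with the paper's indexing: `Γ₁ G = G`, `Γ_{k+1} G = [Γ_k G, G]`. -/
def gammaP (G : Type*) [Group G] (k : ℕ) : Subgroup G := (⊤ : Subgroup G).lowerCentralSeries (k - 1)

instance (G : Type*) [Group G] (k : ℕ) : (gammaP G k).Normal := by
  unfold gammaP; infer_instance

lemma mem_gammaP_one {G : Type*} [Group G] (g : G) : g ∈ gammaP G 1 := by
  show g ∈ (⊤ : Subgroup G).lowerCentralSeries 0
  rw [Subgroup.lowerCentralSeries_zero]; trivial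

lemma commElt_mem_gammaP_two {G : Type*} [Group G] (x y : G) : ⁅x, y⁆ ∈ gammaP G 2 := by
  show ⁅x, y⁆ ∈ (⊤ : Subgroup G).lowerCentralSeries 1
  rw [Subgroup.top_lowerCentralSeries_one, commutator_def]
  exact Subgroup.commutator_mem_commutator (Subgroup.mem_top x) (Subgroup.mem_top y)

/-- The quotient group `Γ_k G / Γ_{k+1} G`. -/
def lcsQuot (G : Type*) [Group G] (k : ℕ) :=
  (gammaP G k) ⧸ ((gammaP G (k + 1)).subgroupOf (gammaP G k))

instance (G : Type*) [Group G] (k : ℕ) : Group (lcsQuot G k) := by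
  unfold lcsQuot; infer_instance

/-- The degree-`k` piece `gr_k(G; ℚ) = (Γ_k G / Γ_{k+1} G) ⊗ ℚ` of the rational associated
graded Lie algebra.  (The quotient `Γ_k/Γ_{k+1}` is abelian, so passing through its
abelianization is the identity.) -/
def grQ (G : Type*) [Group G] (k : ℕ) :=
  ℚ ⊗[ℤ] (Additive (Abelianization (lcsQuot G k)))

instance (G : Type*) [Group G] (k : ℕ) : AddCommGroup (grQ G k) := by
  unfold grQ; infer_instance

instance (G : Type*) [Group G] (k : ℕ) : Module ℚ (grQ G k) := by
  unfold grQ; infer_instance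

/-- The class in `gr_k(G; ℚ)` of an element of `Γ_k G`. -/
def grCls (G : Type*) [Group G] (k : ℕ) (x : gammaP G k) : grQ G k :=
  (1 : ℚ) ⊗ₜ[ℤ] Additive.ofMul (Abelianization.of (QuotientGroup.mk x : lcsQuot G k))

/-! ### Models of `H₁(G;ℚ)`, of `gr(G;ℚ)` as a graded Lie algebra, and of `𝔥(G)` -/

/-- `(V, cls)` is a model of `H₁(G; ℚ) = G_{ab} ⊗ ℚ` together with its canonical class map. -/
structure IsH1Q (G : Type u) [Group G] (V : Type v) [AddCommGroup V] [Module ℚ V]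
    (cls : G → V) : Prop where
  map_mul : ∀ x y : G, cls (x * y) = cls x + cls y
  ker : ∀ x : G, cls x = 0 ↔ ∃ k : ℕ, 0 < k ∧ x ^ k ∈ commutator G
  span : Submodule.span ℚ (Set.range cls) = ⊤

/-- `(L, Lk, cls)` is a model of the rational associated graded Lie algebra
`gr(G; ℚ) = ⊕_{k ≥ 1} (Γ_k G/Γ_{k+1} G) ⊗ ℚ`, with `Lk k` the degree-`k` piece and
`cls k : Γ_k G → L` the canonical class maps; the Lie bracket is induced by the
group commutator. -/
structure IsGrLie (G : Type u) [Group G] (L : Type v) [LieRing L] [LieAlgebra ℚ L]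
    (Lk : ℕ → Submodule ℚ L) (cls : ∀ k : ℕ, (gammaP G k) → L) : Prop where
  internal : DirectSum.IsInternal Lk
  zero : Lk 0 = ⊥
  mem : ∀ (k : ℕ) (x : gammaP G k), cls k x ∈ Lk k
  map_mul : ∀ (k : ℕ) (x y : gammaP G k), cls k (x * y) = cls k x + cls k y
  ker : ∀ (k : ℕ) (x : gammaP G k),
    cls k x = 0 ↔ ∃ j : ℕ, 0 < j ∧ (x : G) ^ j ∈ gammaP G (k + 1)
  span : ∀ k : ℕ, Lk k = Submodule.span ℚ (Set.range (cls k))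
  bracket : ∀ (j k : ℕ) (x : gammaP G j) (y : gammaP G k)
      (h : ⁅(x : G), (y : G)⁆ ∈ gammaP G (j + k)),
      ⁅cls j x, cls k y⁆ = cls (j + k) ⟨⁅(x : G), (y : G)⁆, h⟩

/-- The finite family `(c_i, x_i, y_i)` represents `0` in `gr₂(G; ℚ)`; equivalently, the
corresponding element `Σ c_i · (x̄_i ∧ ȳ_i)` of `⋀² H₁(G;ℚ)` lies in the kernel of the Lie
bracket map `⋀² H₁(G;ℚ) → gr₂(G;ℚ)`. -/
def GrTrivial (G : Type*) [Group G] (s : Finset ℕ) (c : ℕ → ℚ) (x y : ℕ → G) : Prop :=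
  ∑ i ∈ s, c i • grCls G 2 ⟨⁅x i, y i⁆, commElt_mem_gammaP_two _ _⟩ = 0

/-- `(H, ι)` is a model of the holonomy Lie algebra `𝔥(G)`: the quotient of the free
Lie algebra on `H₁(G; ℚ)` by the ideal generated by the kernel of the Lie bracket map
`⋀² H₁(G;ℚ) → gr₂(G;ℚ)` (equivalently, by the image of the dual of the cup product).
Here `ι : G → H` is the composite of the class map `G → H₁(G;ℚ)` with the inclusion of
the degree-one part, and `H` is characterized by the universal property of this quotient. -/
structure IsHolonomy (G : Type u) [Group G] (H : Type v) [LieRing H] [LieAlgebra ℚ H]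
    (ι : G → H) : Prop where
  map_mul : ∀ x y : G, ι (x * y) = ι x + ι y
  ker : ∀ x : G, ι x = 0 ↔ ∃ k : ℕ, 0 < k ∧ x ^ k ∈ commutator G
  gen : LieSubalgebra.lieSpan ℚ H (Set.range ι) = ⊤
  rel : ∀ (s : Finset ℕ) (c : ℕ → ℚ) (x y : ℕ → G), GrTrivial G s c x y →
      ∑ i ∈ s, c i • ⁅ι (x i), ι (y i)⁆ = 0
  univ : ∀ (M : Type (max u v)) [LieRing M] [LieAlgebra ℚ M] (f : G → M),
      (∀ x y : G, f (x * y) = f x + f y) →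
      (∀ (s : Finset ℕ) (c : ℕ → ℚ) (x y : ℕ → G), GrTrivial G s c x y →
        ∑ i ∈ s, c i • ⁅f (x i), f (y i)⁆ = 0) →
      ∃! F : H →ₗ⁅ℚ⁆ M, ∀ g : G, F (ι g) = f g

/-! ### Gradings -/

/-- The standard grading determined by a degree-one piece `V` of a Lie algebra generated in
degree one: `lieDeg V 1 = V` and `lieDeg V (k+1) = span ⁅V, lieDeg V k⁆`. -/
def lieDeg {L : Type*} [LieRing L] [LieAlgebra ℚ L] (V : Submodule ℚ L) :
    ℕ → Submodule ℚ L
  | 0 => ⊥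
  | 1 => V
  | (k + 2) => Submodule.span ℚ {z | ∃ x ∈ V, ∃ y ∈ lieDeg V (k + 1), z = ⁅x, y⁆}

/-- The canonical grading of (a model of) the holonomy Lie algebra `𝔥(G)`, with
`H₁(G;ℚ)` in degree one. -/
def holDeg {G : Type u} [Group G] {H : Type v} [LieRing H] [LieAlgebra ℚ H]
    (ι : G → H) (k : ℕ) : Submodule ℚ H :=
  lieDeg (Submodule.span ℚ (Set.range ι)) k

/-- Two Lie algebras with specified gradings are isomorphic as graded Lie algebras. -/
def IsGradedLieIso {L₁ : Type u} {L₂ : Type v} [LieRing L₁] [LieAlgebra ℚ L₁]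
    [LieRing L₂] [LieAlgebra ℚ L₂] (d₁ : ℕ → Submodule ℚ L₁) (d₂ : ℕ → Submodule ℚ L₂) :
    Prop :=
  ∃ e : L₁ ≃ₗ⁅ℚ⁆ L₂, ∀ k, (d₁ k).map (e.toLinearEquiv.toLinearMap) = d₂ k

/-! ### Finitely presented Lie algebras -/

/-- The degree-one part of the free Lie algebra on the generating set `X`. -/
def flV (X : Type*) : Submodule ℚ (FreeLieAlgebra ℚ X) :=
  Submodule.span ℚ (Set.range (FreeLieAlgebra.of ℚ))

/-- The quotient of the free Lie algebra on the generating set `X` by the Lie ideal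
generated by the set `S`. -/
def presLie (X : Type*) (S : Set (FreeLieAlgebra ℚ X)) :=
  (FreeLieAlgebra ℚ X) ⧸ (LieSubmodule.lieSpan ℚ (FreeLieAlgebra ℚ X) S)

instance (X : Type*) (S : Set (FreeLieAlgebra ℚ X)) : LieRing (presLie X S) := by
  unfold presLie; infer_instance

instance (X : Type*) (S : Set (FreeLieAlgebra ℚ X)) : LieAlgebra ℚ (presLie X S) := by
  unfold presLie; infer_instance

/-- The induced grading on `presLie X S` (images of the graded pieces of the free
Lie algebra). -/
def presDeg (X : Type*) (S : Set (FreeLieAlgebra ℚ X)) (k : ℕ) :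
    Submodule ℚ (presLie X S) :=
  (lieDeg (flV X) k).map
    (LieSubmodule.Quotient.mk' (LieSubmodule.lieSpan ℚ (FreeLieAlgebra ℚ X) S)).toLinearMap

/-- `G` is graded-formal: the canonical surjection `Φ_G : 𝔥(G) ↠ gr(G;ℚ)` (the morphism
restricting to the identity of `H₁(G;ℚ)` in degree one) is an isomorphism. -/
def GradedFormal (G : Type u) [Group G] : Prop :=
  ∀ (H : Type u) [LieRing H] [LieAlgebra ℚ H] (ι : G → H)
    (L : Type u) [LieRing L] [LieAlgebra ℚ L] (Lk : ℕ → Submodule ℚ L)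
    (cls : ∀ k : ℕ, (gammaP G k) → L),
    IsHolonomy G H ι → IsGrLie G L Lk cls →
    ∀ Φ : H →ₗ⁅ℚ⁆ L, (∀ g : G, Φ (ι g) = cls 1 ⟨g, mem_gammaP_one g⟩) →
    Function.Bijective Φ


universe u

instance (G : Type u) [Group G] (n : ℕ) : (derivedSeries G n).Normal :=
  derivedSeries_normal G n

/-! If `N ⊴ G` lies in `Γ₃ G`, the projection `G → G/N` induces isomorphisms on `H₁(-;ℚ)` and on
`gr₂(-;ℚ)`; since `𝔥` is presented by generators `H₁` and relations `ker(⋀² H₁ → gr₂)`, the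
universal properties of `𝔥(G)` and `𝔥(G/N)` give mutually inverse morphisms. This applies to
`N = G⁽ⁱ⁾` for `i ≥ 2`, because `G⁽²⁾ = [G', G'] ≤ [Γ₂ G, G] = Γ₃ G`.

For `i = 1` the group `G/G'` is abelian, hence so is `𝔥(G/G')`. The morphism
`𝔥(G) → 𝔥(G/G')` is onto and kills `𝔥(G)′`, and it factors the projection
`𝔥(G) → 𝔥(G)/𝔥(G)′` through the morphism `𝔥(G/G') → 𝔥(G)/𝔥(G)′`, which is therefore bijective. -/

section LowerCentralSeries

variable {G K : Type*} [Group G] [Group K]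

theorem gammaP_map_le (f : G →* K) (k : ℕ) : (gammaP G k).map f ≤ gammaP K k := by
  rw [gammaP, gammaP, Subgroup.map_lowerCentralSeries]
  exact Subgroup.lowerCentralSeries_mono _ le_top

theorem gammaP_map_of_surjective {f : G →* K} (hf : Function.Surjective f) (k : ℕ) :
    (gammaP G k).map f = gammaP K k := by
  rw [gammaP, gammaP, Subgroup.map_lowerCentralSeries, Subgroup.map_top_of_surjective f hf]

theorem gammaP_three_le_commutator : gammaP G 3 ≤ commutator G :=
  Subgroup.lowerCentralSeries_antitone _ one_le_two

theorem derivedSeries_le_gammaP_three {i : ℕ} (hi : 2 ≤ i) : derivedSeries G i ≤ gammaP G 3 :=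
  (derivedSeries_antitone G hi).trans (Subgroup.commutator_mono (derivedSeries_one G).le le_top)

theorem grCls_one (k : ℕ) : grCls G k 1 = 0 := by
  show (1 : ℚ) ⊗ₜ[ℤ] Additive.ofMul (Abelianization.of (1 : lcsQuot G k)) = 0
  rw [map_one, ofMul_one, tmul_zero]

def gammaPMap (f : G →* K) (k : ℕ) : gammaP G k →* gammaP K k :=
  (f.comp (gammaP G k).subtype).codRestrict _ fun x =>
    gammaP_map_le f k (Subgroup.mem_map_of_mem f x.2)

def lcsQuotMap (f : G →* K) (k : ℕ) : lcsQuot G k →* lcsQuot K k :=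
  QuotientGroup.map _ _ (gammaPMap f k) fun _ hx =>
    gammaP_map_le f (k + 1) (Subgroup.mem_map_of_mem f hx)

theorem lcsQuotMap_two_bijective {f : G →* K} (hf : Function.Surjective f)
    (hker : f.ker ≤ gammaP G 3) : Function.Bijective (lcsQuotMap f 2) := by
  constructor
  · rw [injective_iff_map_eq_one]
    intro a ha
    induction a using QuotientGroup.induction_on with | H x => ?_
    have hx : f x ∈ gammaP K 3 := (QuotientGroup.eq_one_iff (gammaPMap f 2 x)).mp ha
    rw [← gammaP_map_of_surjective hf] at hx
    obtain ⟨y, hy, hyx⟩ := hx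
    have hyx : y⁻¹ * x ∈ f.ker := by simp [MonoidHom.mem_ker, hyx]
    refine (QuotientGroup.eq_one_iff x).mpr (Subgroup.mem_subgroupOf.mpr ?_)
    simpa using mul_mem hy (hker hyx)
  · rintro ⟨z⟩
    obtain ⟨x, hx, hxz⟩ := (gammaP_map_of_surjective hf 2).ge z.2
    exact ⟨QuotientGroup.mk ⟨x, hx⟩, congrArg QuotientGroup.mk (Subtype.ext hxz)⟩

def grQTwoEquiv {f : G →* K} (hf : Function.Surjective f) (hker : f.ker ≤ gammaP G 3) :
    grQ G 2 ≃ₗ[ℚ] grQ K 2 :=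
  LinearEquiv.baseChange ℤ ℚ _ _
    (MulEquiv.ofBijective _
      (lcsQuotMap_two_bijective hf hker)).abelianizationCongr.toAdditive.toIntLinearEquiv

theorem grQTwoEquiv_grCls {f : G →* K} (hf : Function.Surjective f) (hker : f.ker ≤ gammaP G 3)
    (x : gammaP G 2) : grQTwoEquiv hf hker (grCls G 2 x) = grCls K 2 (gammaPMap f 2 x) :=
  rfl

theorem grTrivial_comp_iff {f : G →* K} (hf : Function.Surjective f) (hker : f.ker ≤ gammaP G 3)
    (s : Finset ℕ) (c : ℕ → ℚ) (x y : ℕ → G) :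
    GrTrivial K s c (f ∘ x) (f ∘ y) ↔ GrTrivial G s c x y := by
  rw [GrTrivial, GrTrivial, ← (grQTwoEquiv hf hker).map_eq_zero_iff, map_sum]
  simp only [map_smul, grQTwoEquiv_grCls]
  congr! 4 with i
  exact Subtype.ext (map_commutatorElement f (x i) (y i)).symm

end LowerCentralSeries

section LieAlgebra

variable {L M : Type*} [LieRing L] [LieAlgebra ℚ L] [LieRing M] [LieAlgebra ℚ M]

def quotientLieHom (I : LieIdeal ℚ L) : L →ₗ⁅ℚ⁆ L ⧸ I :=
  { LieSubmodule.Quotient.mk' I with map_lie' := rfl }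

instance isLieAbelian_quotient_derivedSeries_one :
    IsLieAbelian (L ⧸ LieAlgebra.derivedSeries ℚ L 1) := by
  refine ⟨fun x y => ?_⟩
  induction x using Quotient.inductionOn' with | h a => ?_
  induction y using Quotient.inductionOn' with | h b => ?_
  rw [LieSubmodule.Quotient.is_quotient_mk, LieSubmodule.Quotient.is_quotient_mk,
    ← LieSubmodule.Quotient.mk_bracket, LieSubmodule.Quotient.mk_eq_zero']
  exact (LieAlgebra.coe_derivedSeries_one_eq (R := ℚ) (L := L)).ge
    (Submodule.subset_span ⟨a, b, rfl⟩)

theorem LieHom.map_eq_zero_of_mem_derivedSeries_one [IsLieAbelian M] (F : L →ₗ⁅ℚ⁆ M) {x : L}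
    (hx : x ∈ LieAlgebra.derivedSeries ℚ L 1) : F x = 0 := by
  refine LinearMap.mem_ker.mp ((Submodule.span_le (p := LinearMap.ker F.toLinearMap)).mpr ?_
    ((LieAlgebra.coe_derivedSeries_one_eq (R := ℚ) (L := L)).le hx))
  rintro _ ⟨a, b, rfl⟩
  simp [trivial_lie_zero]

theorem lieDeg_map (F : L →ₗ⁅ℚ⁆ M) (V : Submodule ℚ L) :
    ∀ k, (lieDeg V k).map F.toLinearMap = lieDeg (V.map F.toLinearMap) k
  | 0 => Submodule.map_bot _
  | 1 => rfl
  | k + 2 => by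
      rw [lieDeg, lieDeg, Submodule.map_span, ← lieDeg_map F V (k + 1)]
      congr 1
      ext z
      constructor
      · rintro ⟨_, ⟨a, ha, b, hb, rfl⟩, rfl⟩
        exact ⟨F a, ⟨a, ha, rfl⟩, F b, ⟨b, hb, rfl⟩, F.map_lie a b⟩
      · rintro ⟨_, ⟨a, ha, rfl⟩, _, ⟨b, hb, rfl⟩, rfl⟩
        exact ⟨⁅a, b⁆, ⟨a, ha, b, hb, rfl⟩, F.map_lie a b⟩

theorem holDeg_map {G : Type*} [Group G] (F : L →ₗ⁅ℚ⁆ M) (ι : G → L) (k : ℕ) :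
    (holDeg ι k).map F.toLinearMap = holDeg (F ∘ ι) k := by
  rw [holDeg, holDeg, lieDeg_map, Submodule.map_span, ← Set.range_comp]
  rfl

theorem holDeg_comp_of_surjective {G G' : Type*} [Group G] [Group G'] (ι : G' → L) {π : G → G'}
    (hπ : Function.Surjective π) (k : ℕ) : holDeg (ι ∘ π) k = holDeg ι k := by
  rw [holDeg, holDeg, Set.range_comp, hπ.range_eq, Set.image_univ]

end LieAlgebra

theorem QuotientGroup.exists_lift_of_map_mul {G M : Type*} [Group G] [AddCommGroup M]
    (N : Subgroup G) [N.Normal] (θ : G → M) (hθ : ∀ a b, θ (a * b) = θ a + θ b)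
    (hN : ∀ n ∈ N, θ n = 0) :
    ∃ f : G ⧸ N → M, (∀ g : G, f g = θ g) ∧ ∀ a b, f (a * b) = f a + f b := by
  let φ : G →* Multiplicative M := MonoidHom.mk' (fun g => .ofAdd (θ g)) fun a b => by
    simp only [hθ, ofAdd_add]
  have hNφ : N ≤ φ.ker := fun n hn => by simp [φ, MonoidHom.mem_ker, hN n hn]
  exact ⟨fun a => (QuotientGroup.lift N φ hNφ a).toAdd, fun _ => rfl, fun a b => by
    simp only [map_mul, toAdd_mul]⟩

namespace IsHolonomy

section

variable {G : Type u} [Group G] {H : Type v} [LieRing H] [LieAlgebra ℚ H] {ι : G → H}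

theorem map_eq_zero_of_mem_commutator (hH : IsHolonomy G H ι) {g : G} (hg : g ∈ commutator G) :
    ι g = 0 :=
  (hH.ker g).mpr ⟨1, one_pos, by simpa using hg⟩

theorem sum_smul_lie_map_eq_zero (hH : IsHolonomy G H ι) {M : Type*} [LieRing M]
    [LieAlgebra ℚ M] (F : H →ₗ⁅ℚ⁆ M) {s : Finset ℕ} {c : ℕ → ℚ} {x y : ℕ → G}
    (h : GrTrivial G s c x y) : ∑ i ∈ s, c i • ⁅F (ι (x i)), F (ι (y i))⁆ = 0 := by
  simpa only [map_sum, map_smul, LieHom.map_lie, map_zero] using congrArg F (hH.rel s c x y h)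

theorem hom_ext (hH : IsHolonomy G H ι) {M : Type (max u v)} [LieRing M] [LieAlgebra ℚ M]
    {F₁ F₂ : H →ₗ⁅ℚ⁆ M} (h : ∀ g, F₁ (ι g) = F₂ (ι g)) : F₁ = F₂ := by
  obtain ⟨F, -, hF⟩ := hH.univ M (fun g => F₁ (ι g))
    (fun a b => by rw [hH.map_mul, map_add]) fun _ _ _ _ => hH.sum_smul_lie_map_eq_zero F₁
  exact (hF F₁ fun _ => rfl).trans (hF F₂ fun g => (h g).symm).symm

theorem exists_lieHom_of_isLieAbelian (hH : IsHolonomy G H ι) (M : Type (max u v)) [LieRing M]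
    [LieAlgebra ℚ M] [IsLieAbelian M] (f : G → M) (hf : ∀ a b, f (a * b) = f a + f b) :
    ∃ F : H →ₗ⁅ℚ⁆ M, ∀ g, F (ι g) = f g := by
  obtain ⟨F, hF, -⟩ := hH.univ M f hf fun s c x y _ =>
    Finset.sum_eq_zero fun i _ => by rw [trivial_lie_zero, smul_zero]
  exact ⟨F, hF⟩

theorem lieHom_surjective (hH : IsHolonomy G H ι) {M : Type*} [LieRing M] [LieAlgebra ℚ M]
    (F : M →ₗ⁅ℚ⁆ H) (h : ∀ g, ι g ∈ F.range) : Function.Surjective F := by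
  rw [← LieHom.range_eq_top, eq_top_iff, ← hH.gen, LieSubalgebra.lieSpan_le]
  rintro _ ⟨g, rfl⟩
  exact h g

theorem lie_eq_zero_of_commute (hH : IsHolonomy G H ι) {a b : G} (h : Commute a b) :
    ⁅ι a, ι b⁆ = 0 := by
  have hab : (⟨⁅a, b⁆, commElt_mem_gammaP_two a b⟩ : gammaP G 2) = 1 :=
    Subtype.ext (commutatorElement_eq_one_iff_commute.mpr h)
  simpa using hH.rel {0} 1 (fun _ => a) (fun _ => b) (by simp [GrTrivial, hab, grCls_one])

theorem isLieAbelian [IsMulCommutative G] (hH : IsHolonomy G H ι) : IsLieAbelian H := by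
  have hspan : IsLieAbelian (LieSubalgebra.lieSpan ℚ H (Set.range ι)) :=
    LieSubalgebra.isLieAbelian_lieSpan_iff.mpr <| by
      rintro _ ⟨a, rfl⟩ _ ⟨b, rfl⟩
      exact hH.lie_eq_zero_of_commute (mul_comm' a b)
  rw [hH.gen] at hspan
  exact (lie_abelian_iff_equiv_lie_abelian LieSubalgebra.topEquiv).mp hspan

end

section

variable {G H H' : Type u} [Group G] [LieRing H] [LieAlgebra ℚ H] [LieRing H'] [LieAlgebra ℚ H']
  {ι : G → H}

theorem exists_bijective_of_le_gammaP_three (hH : IsHolonomy G H ι) {N : Subgroup G} [N.Normal]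
    (hN : N ≤ gammaP G 3) {ι' : G ⧸ N → H'} (hH' : IsHolonomy (G ⧸ N) H' ι') :
    ∃ F : H →ₗ⁅ℚ⁆ H', (∀ g : G, F (ι g) = ι' g) ∧ Function.Bijective F := by
  have hker : (QuotientGroup.mk' N).ker ≤ gammaP G 3 := (QuotientGroup.ker_mk' N).trans_le hN
  have hgr := grTrivial_comp_iff (QuotientGroup.mk'_surjective N) hker
  obtain ⟨F, hF, -⟩ := hH.univ H' (fun g => ι' g) (fun a b => hH'.map_mul a b)
    fun s c x y h => hH'.rel s c _ _ ((hgr s c x y).mpr h)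
  obtain ⟨f, hf, hfmul⟩ := QuotientGroup.exists_lift_of_map_mul N ι hH.map_mul fun n hn =>
    hH.map_eq_zero_of_mem_commutator (gammaP_three_le_commutator (hN hn))
  obtain ⟨F', hF', -⟩ := hH'.univ H f hfmul fun s c x y h => by
    obtain ⟨x, rfl⟩ := (QuotientGroup.mk'_surjective N).comp_left x
    obtain ⟨y, rfl⟩ := (QuotientGroup.mk'_surjective N).comp_left y
    simpa only [Function.comp_apply, QuotientGroup.mk'_apply, hf] using
      hH.rel s c x y ((hgr s c x y).mp h)
  have hF'F : F'.comp F = LieHom.id := hH.hom_ext fun g => by simp [hF, hF', hf]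
  have hFF' : F.comp F' = LieHom.id := hH'.hom_ext fun a => by
    induction a using QuotientGroup.induction_on with | H g => simp [hF, hF', hf]
  exact ⟨F, hF, Function.bijective_iff_has_inverse.mpr
    ⟨F', LieHom.congr_fun hF'F, LieHom.congr_fun hFF'⟩⟩

theorem exists_lieEquiv_quotient_derivedSeries_one (hH : IsHolonomy G H ι)
    {ι₁ : G ⧸ commutator G → H'} (hH₁ : IsHolonomy (G ⧸ commutator G) H' ι₁) :
    ∃ e : H' ≃ₗ⁅ℚ⁆ H ⧸ LieAlgebra.derivedSeries ℚ H 1,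
      ∀ g : G, e (ι₁ g) = quotientLieHom _ (ι g) := by
  have : IsMulCommutative (G ⧸ commutator G) :=
    Subgroup.Normal.quotient_commutative_iff_commutator_le.mpr le_rfl
  have := hH₁.isLieAbelian
  set q := quotientLieHom (LieAlgebra.derivedSeries ℚ H 1)
  obtain ⟨f, hf, hfmul⟩ := QuotientGroup.exists_lift_of_map_mul (commutator G) (q ∘ ι)
    (fun a b => by simp [hH.map_mul]) fun n hn => by
      simp [hH.map_eq_zero_of_mem_commutator hn]
  obtain ⟨F₁, hF₁⟩ := hH₁.exists_lieHom_of_isLieAbelian _ f hfmul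
  obtain ⟨F₂, hF₂⟩ := hH.exists_lieHom_of_isLieAbelian H' (fun g => ι₁ g)
    fun a b => hH₁.map_mul a b
  have hq : F₁.comp F₂ = q := hH.hom_ext fun g => by simp [hF₂, hF₁, hf]
  have hF₂surj : Function.Surjective F₂ := hH₁.lieHom_surjective F₂ fun a => by
    induction a using QuotientGroup.induction_on with | H g => exact ⟨ι g, hF₂ g⟩
  have hinj : Function.Injective F₁ := by
    refine (injective_iff_map_eq_zero F₁).mpr fun z hz => ?_
    obtain ⟨h, rfl⟩ := hF₂surj z
    have hqh : q h = 0 := by rw [← hq]; exact hz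
    exact LieHom.map_eq_zero_of_mem_derivedSeries_one F₂
      ((LieSubmodule.Quotient.mk_eq_zero _).mp hqh)
  have hsurj : Function.Surjective F₁ := fun z => by
    obtain ⟨h, rfl⟩ := LieSubmodule.Quotient.surjective_mk' _ z
    exact ⟨F₂ h, LieHom.congr_fun hq h⟩
  exact ⟨LieEquiv.ofBijective F₁ ⟨hinj, hsurj⟩, fun g => (hF₁ g).trans (hf g)⟩

end

end IsHolonomy

theorem holonomy_derived_quotients_general (G : Type u) [Group G]
    (H : Type u) [LieRing H] [LieAlgebra ℚ H] (ι : G → H) (hH : IsHolonomy G H ι) :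
    (∀ (H₁ : Type u) [LieRing H₁] [LieAlgebra ℚ H₁]
        (ι₁ : (G ⧸ derivedSeries G 1) → H₁),
        IsHolonomy (G ⧸ derivedSeries G 1) H₁ ι₁ →
        IsGradedLieIso (holDeg ι₁)
          (fun k => (holDeg ι k).map
            (LieSubmodule.Quotient.mk' (LieAlgebra.derivedSeries ℚ H 1)).toLinearMap)) ∧
    (∀ i : ℕ, 2 ≤ i →
      ∀ (Hi : Type u) [LieRing Hi] [LieAlgebra ℚ Hi]
        (ιi : (G ⧸ derivedSeries G i) → Hi),
        IsHolonomy (G ⧸ derivedSeries G i) Hi ιi →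
        ∃ F : H →ₗ⁅ℚ⁆ Hi,
          (∀ g : G, F (ι g) = ιi (QuotientGroup.mk g)) ∧ Function.Bijective F ∧
          ∀ j, (holDeg ι j).map F.toLinearMap = holDeg ιi j) := by
  refine ⟨fun H₁ _ _ ι₁ hH₁ => ?_, fun i hi Hi _ _ ιi hHi => ?_⟩
  · obtain ⟨e, he⟩ := hH.exists_lieEquiv_quotient_derivedSeries_one hH₁
    refine ⟨e, fun k => ?_⟩
    have hι : quotientLieHom _ ∘ ι = (e.toLieHom ∘ ι₁) ∘ QuotientGroup.mk :=
      funext fun g => (he g).symm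
    show (holDeg ι₁ k).map e.toLieHom.toLinearMap = (holDeg ι k).map (quotientLieHom _).toLinearMap
    rw [holDeg_map, holDeg_map, hι, holDeg_comp_of_surjective _ QuotientGroup.mk_surjective]
  · obtain ⟨F, hF, hbij⟩ :=
      hH.exists_bijective_of_le_gammaP_three (derivedSeries_le_gammaP_three hi) hHi
    refine ⟨F, hF, hbij, fun j => ?_⟩
    rw [holDeg_map, show F ∘ ι = ιi ∘ QuotientGroup.mk from funext hF,
      holDeg_comp_of_surjective _ QuotientGroup.mk_surjective]

/-- Proposition 6.9 of [Suciu–Wang].  For a finitely generated group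
`G` with derived series `G⁽ⁱ⁾`:  `𝔥(G/G⁽¹⁾) ≅ 𝔥(G)/𝔥(G)′` (as graded Lie algebras),
and for each `i ≥ 2` the projection `G → G/G⁽ⁱ⁾` induces an isomorphism of graded Lie
algebras `𝔥(G) ≅ 𝔥(G/G⁽ⁱ⁾)`. -/
theorem holonomy_derived_quotients (G : Type u) [Group G] (hG : Group.FG G)
    (H : Type u) [LieRing H] [LieAlgebra ℚ H] (ι : G → H) (hH : IsHolonomy G H ι) :
    (∀ (H₁ : Type u) [LieRing H₁] [LieAlgebra ℚ H₁]
        (ι₁ : (G ⧸ derivedSeries G 1) → H₁),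
        IsHolonomy (G ⧸ derivedSeries G 1) H₁ ι₁ →
        IsGradedLieIso (holDeg ι₁)
          (fun k => (holDeg ι k).map
            (LieSubmodule.Quotient.mk' (LieAlgebra.derivedSeries ℚ H 1)).toLinearMap)) ∧
    (∀ i : ℕ, 2 ≤ i →
      ∀ (Hi : Type u) [LieRing Hi] [LieAlgebra ℚ Hi]
        (ιi : (G ⧸ derivedSeries G i) → Hi),
        IsHolonomy (G ⧸ derivedSeries G i) Hi ιi →
        ∃ F : H →ₗ⁅ℚ⁆ Hi,
          (∀ g : G, F (ι g) = ιi (QuotientGroup.mk g)) ∧ Function.Bijective F ∧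
          ∀ j, (holDeg ι j).map F.toLinearMap = holDeg ιi j) :=
  holonomy_derived_quotients_general G H ι hH

end ArXiv170107768
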